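/- arXiv:2107.01410 — 2 statements merged into one kernel-verified Lean document; each statement's English description precedes it below -/
import Mathlib

section
/- Let G = (V, E) be a connected simple graph with at least two vertices, and let U be a maximal independent set of G with |U| ≥ 2. Then for every vertex i ∈ U there exists a vertex j ∈ U, j ≠ i, such that the geodesic distance d_G(i, j) satisfies 2 ≤ d_G(i, j) ≤ 3. -/
namespace SimpleGraph

variable {V : Type*} {G : SimpleGraph V}

theorem Reachable.exists_dist_eq_of_le_dist {u w : V} (hr : G.Reachable u w) {k : ℕ}
    (hk : k ≤ G.dist u w) : ∃ v, G.dist u v = k := by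
  obtain ⟨p, hp⟩ := hr.exists_walk_length_eq_dist
  refine ⟨p.getVert k, le_antisymm ?_ ?_⟩
  · simpa [hp, hk] using dist_le (p.take k)
  · have hdrop : G.dist (p.getVert k) w ≤ p.length - k := by simpa using dist_le (p.drop k)
    have htri := (p.drop k).reachable.dist_triangle_right u
    omega

theorem exists_adj_of_notMem_of_maximal_indep {U : Set V}
    (hindep : U.Pairwise fun i j => ¬ G.Adj i j)
    (hmaximal : ∀ W : Set V, (W.Pairwise fun i j => ¬ G.Adj i j) → U ⊆ W → W = U)
    {v : V} (hv : v ∉ U) : ∃ u ∈ U, G.Adj v u := by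
  by_contra! hnadj
  have : (insert v U).Pairwise fun i j => ¬ G.Adj i j :=
    hindep.insert fun u hu _ => ⟨hnadj u hu, fun h => hnadj u hu h.symm⟩
  exact hv (hmaximal _ this (Set.subset_insert v U) ▸ Set.mem_insert v U)

/-- A vertex `v` at distance two from `i` on the way to `j` is either in `U` or adjacent to
some `u ∈ U`, which is then at distance at most three from `i`. -/
theorem Connected.exists_mem_ne_dist_le_three (hconn : G.Connected) {U : Set V}
    (hdom : ∀ v ∉ U, ∃ u ∈ U, G.Adj v u) {i j : V} (hi : i ∈ U) (hj : j ∈ U) (hji : j ≠ i) :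
    ∃ k ∈ U, k ≠ i ∧ G.dist i k ≤ 3 := by
  by_cases hle : G.dist i j ≤ 3
  · exact ⟨j, hj, hji, hle⟩
  obtain ⟨v, hv⟩ := (hconn i j).exists_dist_eq_of_le_dist (k := 2) (by omega)
  by_cases hvU : v ∈ U
  · refine ⟨v, hvU, ?_, hv.le.trans (by norm_num)⟩
    rintro rfl
    simp at hv
  obtain ⟨u, hu, hvu⟩ := hdom v hvU
  refine ⟨u, hu, ?_, ?_⟩
  · rintro rfl
    have := dist_eq_one_iff_adj.mpr hvu.symm
    omega
  · have := (hconn v u).dist_triangle_right i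
    have := dist_eq_one_iff_adj.mpr hvu
    omega

end SimpleGraph

theorem stmt2_general {V : Type*} (G : SimpleGraph V)
    (hconn : G.Connected)
    (U : Set V)
    (hindep : U.Pairwise fun i j => ¬ G.Adj i j)
    (hmaximal : ∀ W : Set V, (W.Pairwise fun i j => ¬ G.Adj i j) → U ⊆ W → W = U)
    (hU2 : 2 ≤ U.ncard) :
    ∀ i ∈ U, ∃ j ∈ U, j ≠ i ∧ 2 ≤ G.dist i j ∧ G.dist i j ≤ 3 := by
  intro i hi
  obtain ⟨j, hj, hji⟩ := Set.exists_ne_of_one_lt_ncard (s := U) (by omega) i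
  obtain ⟨k, hk, hki, hle⟩ := hconn.exists_mem_ne_dist_le_three
    (fun _ hv => G.exists_adj_of_notMem_of_maximal_indep hindep hmaximal hv) hi hj hji
  exact ⟨k, hk, hki, hconn.one_lt_dist_of_ne_of_not_adj hki.symm (hindep hi hk hki.symm), hle⟩

theorem stmt2 {V : Type*} [Fintype V] (G : SimpleGraph V)
    (hconn : G.Connected) (hcard : 2 ≤ Fintype.card V)
    (U : Set V)
    (hindep : U.Pairwise fun i j => ¬ G.Adj i j)
    (hmaximal : ∀ W : Set V, (W.Pairwise fun i j => ¬ G.Adj i j) → U ⊆ W → W = U)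
    (hU2 : 2 ≤ U.ncard) :
    ∀ i ∈ U, ∃ j ∈ U, j ≠ i ∧ 2 ≤ G.dist i j ∧ G.dist i j ≤ 3 :=
  stmt2_general G hconn U hindep hmaximal hU2
end

section
/- Let G = (V, E) be a connected simple graph and U a maximal independent set of G. Define a graph H on vertex set U by joining u, v ∈ U whenever 1 ≤ d_G(u, v) ≤ 3. Then H is connected. -/
/-!
A maximal independent set `U` dominates `G`. Sending every vertex to a neighbour (or itself) in `U`
moves the endpoints of each edge of `G` by at most one step, so adjacent vertices go to points of
`U` at distance at most `3`; hence every walk of `G` projects to a walk of `poolGraph G U`.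
-/

/-- The graph on a vertex subset `U` joining `u ≠ v` whenever their geodesic
distance in `G` is at most `3`. -/
def poolGraph {V : Type*} (G : SimpleGraph V) (U : Set V) : SimpleGraph U where
  Adj u v := u ≠ v ∧ G.dist (u : V) (v : V) ≤ 3
  symm := by
    constructor
    intro u v h
    exact ⟨h.1.symm, by rw [SimpleGraph.dist_comm]; exact h.2⟩
  loopless := by
    constructor
    intro u h
    exact h.1 rfl

open SimpleGraph

section

variable {V : Type*} {G : SimpleGraph V} {U : Set V}

theorem SimpleGraph.exists_mem_dist_le_one_of_maximal_indep
    (hindep : U.Pairwise fun i j => ¬ G.Adj i j)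
    (hmaximal : ∀ W : Set V, (W.Pairwise fun i j => ¬ G.Adj i j) → U ⊆ W → W = U) (x : V) :
    ∃ u ∈ U, G.dist x u ≤ 1 := by
  by_contra! hfar
  have hnotAdj : ∀ u ∈ U, ¬ G.Adj x u := fun u hu hxu =>
    (hfar u hu).not_ge (dist_eq_one_iff_adj.mpr hxu).le
  have hinsert : (insert x U).Pairwise fun i j => ¬ G.Adj i j :=
    Set.pairwise_insert.mpr
      ⟨hindep, fun u hu _ => ⟨hnotAdj u hu, fun hux => hnotAdj u hu hux.symm⟩⟩
  have hxU : x ∈ U := hmaximal _ hinsert (Set.subset_insert x U) ▸ Set.mem_insert x U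
  exact (hfar x hxU).not_ge (by simp)

theorem poolGraph_reachable_of_dist_le_three {u v : U} (h : G.dist (u : V) v ≤ 3) :
    (poolGraph G U).Reachable u v := by
  by_cases huv : u = v
  · exact huv ▸ Reachable.refl u
  · exact Adj.reachable ⟨huv, h⟩

theorem poolGraph_connected_of_dominating (hconn : G.Connected)
    (hdom : ∀ x : V, ∃ u ∈ U, G.dist x u ≤ 1) : (poolGraph G U).Connected := by
  choose f hfU hf using hdom
  let g : V → U := fun x => ⟨f x, hfU x⟩
  have hdist : ∀ x y, G.dist (g x : V) (g y) ≤ G.dist x y + 2 := fun x y =>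
    calc G.dist (f x) (f y) ≤ G.dist (f x) x + G.dist x (f y) := hconn.dist_triangle
      _ ≤ G.dist (f x) x + (G.dist x y + G.dist y (f y)) := by gcongr; exact hconn.dist_triangle
      _ ≤ G.dist x y + 2 := by linarith [hf x, hf y, dist_comm (G := G) (u := f x) (v := x)]
  have hproj : ∀ x y, (poolGraph G U).Reachable (g x) (g y) := fun x y => by
    rw [reachable_iff_reflTransGen]
    refine Relation.ReflTransGen.lift' g (fun a b hab => ?_) x y
      ((reachable_iff_reflTransGen x y).mp (hconn x y))
    rw [Function.onFun, ← reachable_iff_reflTransGen]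
    exact poolGraph_reachable_of_dist_le_three
      ((hdist a b).trans (by rw [dist_eq_one_iff_adj.mpr hab]))
  have hretract : ∀ u : U, (poolGraph G U).Reachable u (g u) := fun u =>
    poolGraph_reachable_of_dist_le_three (by linarith [hf u])
  have : Nonempty U := ⟨g hconn.nonempty.some⟩
  exact (connected_iff _).mpr
    ⟨fun u v => ((hretract u).trans (hproj u v)).trans (hretract v).symm, inferInstance⟩

end

theorem stmt4_general {V : Type*} (G : SimpleGraph V)
    (hconn : G.Connected)
    (U : Set V)
    (hindep : U.Pairwise fun i j => ¬ G.Adj i j)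
    (hmaximal : ∀ W : Set V, (W.Pairwise fun i j => ¬ G.Adj i j) → U ⊆ W → W = U) :
    (poolGraph G U).Connected :=
  poolGraph_connected_of_dominating hconn
    (exists_mem_dist_le_one_of_maximal_indep hindep hmaximal)

theorem stmt4 {V : Type*} [Fintype V] [Nonempty V] (G : SimpleGraph V)
    (hconn : G.Connected)
    (U : Set V)
    (hindep : U.Pairwise fun i j => ¬ G.Adj i j)
    (hmaximal : ∀ W : Set V, (W.Pairwise fun i j => ¬ G.Adj i j) → U ⊆ W → W = U) :
    (poolGraph G U).Connected :=
  stmt4_general G hconn U hindep hmaximal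
end
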